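/- arXiv:2211.09525 — 4 statements merged into one kernel-verified Lean document; each statement's English description precedes it below -/
import Mathlib

section
/- Let C and C' be faces of a finite arrangement 𝓗 of linear hyperplanes through the origin in a finite-dimensional real vector space V. Then C' ⊆ closure(C) if and only if for every H ∈ 𝓗 either v_H(C') = 0 or v_H(C') = v_H(C). Consequently the closure order on faces coincides with the componentwise sign order in which 0 ≤ +1 and 0 ≤ −1. -/
noncomputable section

variable {V : Type*} [NormedAddCommGroup V] [NormedSpace ℝ V] {ι : Type*}

/-- The sign vector of a point with respect to a family of defining linear forms. -/
def sgnVec (f : ι → V →ₗ[ℝ] ℝ) (x : V) : ι → SignType := fun i => SignType.sign (f i x)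

/-- The face (cell) of the arrangement containing the point `x`:
the level set of the sign-vector map through `x`. -/
def faceOf (f : ι → V →ₗ[ℝ] ℝ) (x : V) : Set V := {y | sgnVec f y = sgnVec f x}

/-- The type of faces (cells) of the arrangement with defining forms `f`. -/
def Face (f : ι → V →ₗ[ℝ] ℝ) : Type _ := {C : Set V // ∃ x : V, C = faceOf f x}

/-- The closure order on faces: `C' ≤ C` iff `C' ⊆ closure C`. -/
def FaceLE {f : ι → V →ₗ[ℝ] ℝ} (C' C : Face f) : Prop := C'.1 ⊆ closure C.1

lemma FaceLE.refl {f : ι → V →ₗ[ℝ] ℝ} (C : Face f) : FaceLE C C := subset_closure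

lemma FaceLE.trans' {f : ι → V →ₗ[ℝ] ℝ} {C'' C' C : Face f}
    (h1 : FaceLE C'' C') (h2 : FaceLE C' C) : FaceLE C'' C :=
  h1.trans (closure_minimal h2 isClosed_closure)

/-- The face of the origin. -/
def faceO (f : ι → V →ₗ[ℝ] ℝ) : Face f := ⟨faceOf f 0, 0, rfl⟩

/-- The face of the origin is below every face in the closure order. -/
lemma faceO_le {f : ι → V →ₗ[ℝ] ℝ} (C : Face f) : FaceLE (faceO f) C := by
  obtain ⟨S, x, rfl⟩ := C
  intro y hy
  have hy0 : ∀ i, f i y = 0 := by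
    intro i
    have : SignType.sign (f i y) = SignType.sign (f i (0 : V)) := congrFun hy i
    simpa using this
  have hten : Filter.Tendsto (fun t : ℝ => y + t • x) (nhdsWithin 0 (Set.Ioi 0)) (nhds y) := by
    have h : Filter.Tendsto (fun t : ℝ => y + t • x) (nhds 0) (nhds (y + (0:ℝ) • x)) :=
      tendsto_const_nhds.add ((continuous_id.smul continuous_const).tendsto 0)
    simpa using h.mono_left nhdsWithin_le_nhds
  refine mem_closure_of_tendsto hten ?_
  filter_upwards [self_mem_nhdsWithin] with t ht
  show y + t • x ∈ faceOf f x
  funext i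
  simp only [sgnVec, map_add, map_smul, hy0 i, zero_add, smul_eq_mul]
  rw [sign_mul, sign_pos ht, one_mul]

universe u

/-- A double representation of the face poset of an arrangement. -/
structure DoubleRep (f : ι → V →ₗ[ℝ] ℝ) where
  E : Face f → ModuleCat.{u} ℂ
  finDim : ∀ C, FiniteDimensional ℂ (E C)
  γ : ∀ C' C : Face f, FaceLE C' C → (E C' →ₗ[ℂ] E C)
  δ : ∀ C' C : Face f, FaceLE C' C → (E C →ₗ[ℂ] E C')
  γ_id : ∀ (C : Face f) (h : FaceLE C C), γ C C h = LinearMap.id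
  δ_id : ∀ (C : Face f) (h : FaceLE C C), δ C C h = LinearMap.id
  γ_comp : ∀ (C'' C' C : Face f) (h1 : FaceLE C'' C') (h2 : FaceLE C' C),
    γ C'' C (h1.trans' h2) = (γ C' C h2).comp (γ C'' C' h1)
  δ_comp : ∀ (C'' C' C : Face f) (h1 : FaceLE C'' C') (h2 : FaceLE C' C),
    δ C'' C (h1.trans' h2) = (δ C'' C' h1).comp (δ C' C h2)

/-- The map `φ_{AB} = γ_{OB} ∘ δ_{AO}` of a double representation. -/
def phiMap {f : ι → V →ₗ[ℝ] ℝ} (ψ : DoubleRep f) (A B : Face f) : ψ.E A →ₗ[ℂ] ψ.E B :=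
  (ψ.γ (faceO f) B (faceO_le B)).comp (ψ.δ (faceO f) A (faceO_le A))

/-- Monotonicity: `γ_{C'C} ∘ δ_{CC'} = id`. -/
def Monotonicity {f : ι → V →ₗ[ℝ] ℝ} (ψ : DoubleRep f) : Prop :=
  ∀ (C' C : Face f) (h : FaceLE C' C), (ψ.γ C' C h).comp (ψ.δ C' C h) = LinearMap.id

/-- A collinear triple of faces. -/
def Collin3 {f : ι → V →ₗ[ℝ] ℝ} (A B C : Face f) : Prop :=
  ∃ a ∈ A.1, ∃ b ∈ B.1, ∃ c ∈ C.1, b ∈ segment ℝ a c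

/-- Transitivity: `φ_{AC} = φ_{BC} ∘ φ_{AB}` for collinear triples. -/
def Transitivity {f : ι → V →ₗ[ℝ] ℝ} (ψ : DoubleRep f) : Prop :=
  ∀ A B C : Face f, Collin3 A B C → phiMap ψ A C = (phiMap ψ B C).comp (phiMap ψ A B)

/-- Two faces of equal dimension and equal span are opposed by a face `D` of one lower
dimension. -/
def Opposed (f : ι → V →ₗ[ℝ] ℝ) (C1 C2 D : Face f) : Prop :=
  C1 ≠ C2 ∧ Submodule.span ℝ C1.1 = Submodule.span ℝ C2.1 ∧
  FaceLE D C1 ∧ FaceLE D C2 ∧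
  Module.finrank ℝ (Submodule.span ℝ D.1) + 1 = Module.finrank ℝ (Submodule.span ℝ C1.1) ∧
  ∀ i, (∀ d ∈ D.1, f i d = 0) → ∀ y ∈ C1.1, ∀ z ∈ C2.1,
    SignType.sign (f i y) = - SignType.sign (f i z) ∧ SignType.sign (f i y) ≠ 0

/-- Invertibility: `φ_{C₁C₂}` is an isomorphism whenever `C₁, C₂` are opposed by a face. -/
def Invertibility {f : ι → V →ₗ[ℝ] ℝ} (ψ : DoubleRep f) : Prop :=
  ∀ C1 C2 D : Face f, Opposed f C1 C2 D → Function.Bijective (phiMap ψ C1 C2)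

/-- Membership in the category `𝓙_𝓗`. -/
def InJ {f : ι → V →ₗ[ℝ] ℝ} (ψ : DoubleRep f) : Prop :=
  Monotonicity ψ ∧ Transitivity ψ ∧ Invertibility ψ

/-- A chamber: a face on which no defining form vanishes. -/
def IsChamber (f : ι → V →ₗ[ℝ] ℝ) (C : Face f) : Prop := ∀ i, ∀ y ∈ C.1, f i y ≠ 0

/-- A codimension-one face: exactly one defining form vanishes on it. -/
def IsCodimOne (f : ι → V →ₗ[ℝ] ℝ) (D : Face f) : Prop := ∃! i, ∀ y ∈ D.1, f i y = 0

/-- A subrepresentation of a double representation. -/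
def IsSubrep {f : ι → V →ₗ[ℝ] ℝ} (ψ : DoubleRep f) (F : ∀ C, Submodule ℂ (ψ.E C)) : Prop :=
  ∀ (C' C : Face f) (h : FaceLE C' C),
    (∀ v ∈ F C', ψ.γ C' C h v ∈ F C) ∧ (∀ v ∈ F C, ψ.δ C' C h v ∈ F C')

/-- Simplicity of a double representation. -/
def IsSimpleRep {f : ι → V →ₗ[ℝ] ℝ} (ψ : DoubleRep f) : Prop :=
  (∃ (C : Face f) (v : ψ.E C), v ≠ 0) ∧
  ∀ F, IsSubrep ψ F → (∀ C, F C = ⊥) ∨ (∀ C, F C = ⊤)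

/-! Signs of linear forms only weaken to `0` under limits, since the closures of `{r > 0}` and
`{r < 0}` are `{r ≥ 0}` and `{r ≤ 0}`; this gives one direction. Conversely, if the signs of `y`
weakly agree with those of `x`, then `y + t • x` has exactly the signs of `x` for every `t > 0`,
and it tends to `y` as `t → 0⁺`. -/

lemma sign_add_mul_of_pos {a b t : ℝ} (ht : 0 < t)
    (h : SignType.sign a = 0 ∨ SignType.sign a = SignType.sign b) :
    SignType.sign (a + t * b) = SignType.sign b := by
  rcases lt_trichotomy b 0 with hb | rfl | hb
  · have ha : a ≤ 0 := by
      rcases h with h | h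
      · exact (sign_eq_zero_iff.mp h).le
      · exact (sign_eq_neg_one_iff.mp (h.trans (sign_neg hb))).le
    rw [sign_neg hb, sign_neg (by nlinarith)]
  · simpa only [mul_zero, add_zero, sign_zero, or_self] using h
  · have ha : 0 ≤ a := by
      rcases h with h | h
      · exact (sign_eq_zero_iff.mp h).ge
      · exact (sign_eq_one_iff.mp (h.trans (sign_pos hb))).le
    rw [sign_pos hb, sign_pos (by nlinarith)]

lemma closure_setOf_sign_eq_subset (s : SignType) :
    closure {r : ℝ | SignType.sign r = s} ⊆ {r | SignType.sign r = 0 ∨ SignType.sign r = s} := by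
  cases s
  · refine (closure_minimal (fun r hr => sign_eq_zero_iff.mp hr) isClosed_singleton).trans ?_
    rintro r rfl
    exact Or.inl sign_zero
  · refine (closure_minimal (fun r hr => (sign_eq_neg_one_iff.mp hr).le) isClosed_Iic).trans ?_
    intro r (hr : r ≤ 0)
    rcases hr.lt_or_eq with hr | rfl
    · exact Or.inr (sign_neg hr)
    · exact Or.inl sign_zero
  · refine (closure_minimal (fun r hr => (sign_eq_one_iff.mp hr).le) isClosed_Ici).trans ?_
    intro r (hr : 0 ≤ r)
    rcases hr.lt_or_eq with hr | rfl
    · exact Or.inr (sign_pos hr)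
    · exact Or.inl sign_zero

lemma sign_eq_zero_or_eq_of_mem_closure_faceOf [FiniteDimensional ℝ V]
    {f : ι → V →ₗ[ℝ] ℝ} {x y : V} (hy : y ∈ closure (faceOf f x)) (i : ι) :
    SignType.sign (f i y) = 0 ∨ SignType.sign (f i y) = SignType.sign (f i x) := by
  have hsub : faceOf f x ⊆ f i ⁻¹' {r | SignType.sign r = SignType.sign (f i x)} :=
    fun z hz => congrFun hz i
  exact closure_setOf_sign_eq_subset _
    ((f i).continuous_of_finiteDimensional.closure_preimage_subset _ (closure_mono hsub hy))

lemma add_smul_mem_faceOf {f : ι → V →ₗ[ℝ] ℝ} {x y : V}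
    (hy : ∀ i, SignType.sign (f i y) = 0 ∨ SignType.sign (f i y) = SignType.sign (f i x))
    {t : ℝ} (ht : 0 < t) : y + t • x ∈ faceOf f x := by
  funext i
  simp only [sgnVec, map_add, map_smul, smul_eq_mul]
  exact sign_add_mul_of_pos ht (hy i)

lemma mem_closure_faceOf {f : ι → V →ₗ[ℝ] ℝ} {x y : V}
    (hy : ∀ i, SignType.sign (f i y) = 0 ∨ SignType.sign (f i y) = SignType.sign (f i x)) :
    y ∈ closure (faceOf f x) := by
  have hlim : Filter.Tendsto (fun t : ℝ => y + t • x) (nhdsWithin 0 (Set.Ioi 0)) (nhds y) := by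
    have hcont : Continuous fun t : ℝ => y + t • x :=
      continuous_const.add (continuous_id.smul continuous_const)
    have h := (hcont.tendsto 0).mono_left (nhdsWithin_le_nhds (s := Set.Ioi 0))
    simpa only [id, zero_smul, add_zero] using h
  refine mem_closure_of_tendsto hlim ?_
  filter_upwards [self_mem_nhdsWithin] with t ht
  exact add_smul_mem_faceOf hy ht

theorem statement0_general {V : Type*} [NormedAddCommGroup V] [NormedSpace ℝ V]
    [FiniteDimensional ℝ V] {ι : Type*}
    (f : ι → V →ₗ[ℝ] ℝ)
    (C C' : Face f) (x x' : V) (hx : C.1 = faceOf f x) (hx' : C'.1 = faceOf f x') :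
    FaceLE C' C ↔
      ∀ i, SignType.sign (f i x') = 0 ∨ SignType.sign (f i x') = SignType.sign (f i x) := by
  unfold FaceLE
  rw [hx, hx']
  constructor
  · intro h
    exact sign_eq_zero_or_eq_of_mem_closure_faceOf (h (show x' ∈ faceOf f x' from rfl))
  · intro h y (hy : sgnVec f y = sgnVec f x')
    refine mem_closure_faceOf fun i => ?_
    rw [show SignType.sign (f i y) = SignType.sign (f i x') from congrFun hy i]
    exact h i

/-- For faces `C, C'` of a finite arrangement of linear hyperplanes through
the origin in a finite-dimensional real vector space, `C' ⊆ closure C` iff for every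
hyperplane the sign of `C'` is `0` or equals the sign of `C`; i.e. the closure order on
faces coincides with the componentwise sign order in which `0 ≤ +1` and `0 ≤ -1`. -/
theorem statement0 {V : Type*} [NormedAddCommGroup V] [NormedSpace ℝ V]
    [FiniteDimensional ℝ V] {ι : Type*} [Finite ι]
    (f : ι → V →ₗ[ℝ] ℝ) (hf : ∀ i, f i ≠ 0)
    (hker : ∀ p q : ι, LinearMap.ker (f p) = LinearMap.ker (f q) → p = q)
    (C C' : Face f) (x x' : V) (hx : C.1 = faceOf f x) (hx' : C'.1 = faceOf f x') :
    FaceLE C' C ↔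
      ∀ i, SignType.sign (f i x') = 0 ∨ SignType.sign (f i x') = SignType.sign (f i x) :=
  statement0_general f C C' x x' hx hx'

end
end

section
/- For every n ≥ 1 and every collection of signs ε_{i,j} ∈ {+1,−1} (1 ≤ i < j ≤ n) and ε_i ∈ {+1,−1} (1 ≤ i ≤ n), the following are equivalent: (a) there exists P ∈ ℝ^n with sgn(A_{i,j}(P)) = ε_{i,j} for all i < j and sgn(B_i(P)) = ε_i for all i; (b) there exists Q ∈ ℝ^n with sgn(A_{i,j}(Q)) = ε_{i,j} for all i < j and sgn(B̃_i(Q)) = ε_i for all i. Equivalently, matching sign vectors defines a bijection between the chambers of 𝓗_{ℝ^n} and the chambers of 𝓗_{W_n}. -/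
noncomputable section

/-- The linear form `A_{i,j}(y) = y_i - y_j` on `ℝ^n`. -/
def Aform (n : ℕ) (i j : Fin n) (y : Fin n → ℝ) : ℝ := y i - y j

/-- The linear form `B_i(y) = 2 y_i + ∑_{j ≠ i} y_j` on `ℝ^n`. -/
def Bform (n : ℕ) (i : Fin n) (y : Fin n → ℝ) : ℝ := 2 * y i + ∑ k ∈ Finset.univ.erase i, y k

/-- The linear form `B̃_i(y) = y_1 + B_i(y)` on `ℝ^n`. -/
def Btform (n : ℕ) (hn : 0 < n) (i : Fin n) (y : Fin n → ℝ) : ℝ := y ⟨0, hn⟩ + Bform n i y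

lemma Aform_shift (n : ℕ) (i j : Fin n) (y : Fin n → ℝ) (c : ℝ) :
    Aform n i j (fun k => y k + c) = Aform n i j y := by
  simp [Aform]

lemma Bform_shift (n : ℕ) (hn : 0 < n) (i : Fin n) (y : Fin n → ℝ) (c : ℝ) :
    Bform n i (fun k => y k + c) = Bform n i y + (n + 1) * c := by
  unfold Bform
  rw [Finset.sum_add_distrib, Finset.sum_const]
  have hcard : (Finset.univ.erase i).card = n - 1 := by
    simp [Finset.card_erase_of_mem]
  rw [hcard, nsmul_eq_mul, Nat.cast_sub hn]
  push_cast
  ring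

/-- For `n ≥ 1` and signs `ε_{i,j}, ε_i ∈ {+1,-1}`, a sign vector is
realized by some `P ∈ ℝ^n` for the forms `(A_{i,j}; B_i)` iff it is realized by some
`Q ∈ ℝ^n` for the forms `(A_{i,j}; B̃_i)`; i.e. matching sign vectors is a bijection
between the chambers of `𝓗_{ℝ^n}` and the chambers of `𝓗_{W_n}`. -/
theorem statement1 (n : ℕ) (hn : 0 < n)
    (εA : Fin n → Fin n → SignType) (hεA : ∀ i j : Fin n, i < j → εA i j = 1 ∨ εA i j = -1)
    (εB : Fin n → SignType) (hεB : ∀ i : Fin n, εB i = 1 ∨ εB i = -1) :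
    ((∃ P : Fin n → ℝ,
        (∀ i j : Fin n, i < j → SignType.sign (Aform n i j P) = εA i j) ∧
        (∀ i : Fin n, SignType.sign (Bform n i P) = εB i)) ↔
      (∃ Q : Fin n → ℝ,
        (∀ i j : Fin n, i < j → SignType.sign (Aform n i j Q) = εA i j) ∧
        (∀ i : Fin n, SignType.sign (Btform n hn i Q) = εB i))) := by
  have hn2 : (n : ℝ) + 2 ≠ 0 := by positivity
  have hn1 : (n : ℝ) + 1 ≠ 0 := by positivity
  constructor
  · rintro ⟨P, hA, hB⟩
    refine ⟨fun k => P k + (-(P ⟨0, hn⟩) / (n + 2)), fun i j hij => by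
      rw [Aform_shift]; exact hA i j hij, fun i => ?_⟩
    have : Btform n hn i (fun k => P k + (-(P ⟨0, hn⟩) / (n + 2))) = Bform n i P := by
      unfold Btform
      rw [Bform_shift n hn]
      field_simp
      ring
    rw [this]; exact hB i
  · rintro ⟨Q, hA, hB⟩
    refine ⟨fun k => Q k + (Q ⟨0, hn⟩ / (n + 1)), fun i j hij => by
      rw [Aform_shift]; exact hA i j hij, fun i => ?_⟩
    have : Bform n i (fun k => Q k + (Q ⟨0, hn⟩ / (n + 1))) = Btform n hn i Q := by
      unfold Btform
      rw [Bform_shift n hn]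
      field_simp
      ring
    rw [this]; exact hB i

end
end

section
/- For every n ≥ 1, a sign vector (ε_{i,j})_{1≤i<j≤n}, (ε_i)_{1≤i≤n} with entries in {+1,0,−1} is realized by some P ∈ ℝ^n for the family of forms (A_{i,j}; B_i) if and only if it is realized by some Q ∈ ℝ^n for the family (A_{i,j}; B̃_i). The resulting bijection ι_n from the faces of 𝓗_{ℝ^n} to the faces of 𝓗_{W_n}, which matches faces with equal sign vectors, is an order isomorphism of face posets: for faces C, C' of 𝓗_{ℝ^n}, C' ⊆ closure(C) if and only if ι_n(C') ⊆ closure(ι_n(C)). -/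
noncomputable section

/-- The face of `P` in the arrangement `𝓗_{ℝ^n}` with forms `(A_{i,j}; B_i)`. -/
def faceB (n : ℕ) (P : Fin n → ℝ) : Set (Fin n → ℝ) :=
  {y | (∀ i j : Fin n, i < j → SignType.sign (Aform n i j y) = SignType.sign (Aform n i j P)) ∧
       (∀ i : Fin n, SignType.sign (Bform n i y) = SignType.sign (Bform n i P))}

/-- The face of `Q` in the arrangement `𝓗_{W_n}` with forms `(A_{i,j}; B̃_i)`. -/
def faceBt (n : ℕ) (hn : 0 < n) (Q : Fin n → ℝ) : Set (Fin n → ℝ) :=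
  {y | (∀ i j : Fin n, i < j → SignType.sign (Aform n i j y) = SignType.sign (Aform n i j Q)) ∧
       (∀ i : Fin n, SignType.sign (Btform n hn i y) = SignType.sign (Btform n hn i Q))}

namespace Statement3Aux

variable (n : ℕ) (hn : 0 < n)

/-- The shift map `T y = y - (y₀/(n+2))·1`. -/
def Tmap (y : Fin n → ℝ) : Fin n → ℝ := fun k => y k - y ⟨0, hn⟩ / (n + 2)

/-- Inverse of `Tmap`. -/
def Tinv (y : Fin n → ℝ) : Fin n → ℝ := fun k => y k + y ⟨0, hn⟩ / (n + 1)

lemma Tinv_Tmap (y : Fin n → ℝ) : Tinv n hn (Tmap n hn y) = y := by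
  funext k
  simp only [Tmap, Tinv]
  have h1 : (n : ℝ) + 2 ≠ 0 := by positivity
  have h2 : (n : ℝ) + 1 ≠ 0 := by positivity
  field_simp
  ring

lemma Tmap_Tinv (y : Fin n → ℝ) : Tmap n hn (Tinv n hn y) = y := by
  funext k
  simp only [Tmap, Tinv]
  have h1 : (n : ℝ) + 2 ≠ 0 := by positivity
  have h2 : (n : ℝ) + 1 ≠ 0 := by positivity
  field_simp
  ring

lemma A_Tmap (i j : Fin n) (y : Fin n → ℝ) :
    Aform n i j (Tmap n hn y) = Aform n i j y := by
  simp only [Aform, Tmap]; ring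

lemma Bt_Tmap (i : Fin n) (y : Fin n → ℝ) :
    Btform n hn i (Tmap n hn y) = Bform n i y := by
  have hcard : (((Finset.univ : Finset (Fin n)).erase i).card : ℝ) = (n : ℝ) - 1 := by
    rw [Finset.card_erase_of_mem (Finset.mem_univ i), Finset.card_univ, Fintype.card_fin,
      Nat.cast_sub hn]
    simp
  have h1 : (n : ℝ) + 2 ≠ 0 := by positivity
  simp only [Btform, Bform, Tmap, Finset.sum_sub_distrib, Finset.sum_const, nsmul_eq_mul]
  rw [hcard]
  field_simp
  ring

/-- The shift map as a homeomorphism of `ℝ^n`. -/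
def Thomeo : Homeomorph (Fin n → ℝ) (Fin n → ℝ) where
  toFun := Tmap n hn
  invFun := Tinv n hn
  left_inv := Tinv_Tmap n hn
  right_inv := Tmap_Tinv n hn
  continuous_toFun := by
    refine continuous_pi fun k => ?_
    exact (continuous_apply k).sub ((continuous_apply _).div_const _)
  continuous_invFun := by
    refine continuous_pi fun k => ?_
    exact (continuous_apply k).add ((continuous_apply _).div_const _)

lemma face_image (P Q : Fin n → ℝ)
    (hA : ∀ i j : Fin n, i < j →
      SignType.sign (Aform n i j Q) = SignType.sign (Aform n i j P))
    (hB : ∀ i : Fin n, SignType.sign (Btform n hn i Q) = SignType.sign (Bform n i P)) :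
    faceBt n hn Q = Tmap n hn '' faceB n P := by
  ext y
  constructor
  · rintro ⟨h1, h2⟩
    refine ⟨Tinv n hn y, ⟨?_, ?_⟩, Tmap_Tinv n hn y⟩
    · intro i j hij
      have := h1 i j hij
      rw [← Tmap_Tinv n hn y, A_Tmap] at this
      rw [this, hA i j hij]
    · intro i
      have := h2 i
      rw [← Tmap_Tinv n hn y, Bt_Tmap] at this
      rw [this, hB i]
  · rintro ⟨x, ⟨h1, h2⟩, rfl⟩
    refine ⟨?_, ?_⟩
    · intro i j hij
      rw [A_Tmap, h1 i j hij, ← hA i j hij]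
    · intro i
      rw [Bt_Tmap, h2 i, ← hB i]

end Statement3Aux

/-- A sign vector is realized for the family `(A_{i,j}; B_i)` iff it is
realized for the family `(A_{i,j}; B̃_i)`, and the resulting bijection `ι_n` between the
faces of `𝓗_{ℝ^n}` and of `𝓗_{W_n}`, matching faces with the same sign vectors, is an
order isomorphism for the closure order on faces. -/
theorem statement3 (n : ℕ) (hn : 0 < n) :
    (∀ (εA : Fin n → Fin n → SignType) (εB : Fin n → SignType),
      (∃ P : Fin n → ℝ,
        (∀ i j : Fin n, i < j → SignType.sign (Aform n i j P) = εA i j) ∧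
        (∀ i : Fin n, SignType.sign (Bform n i P) = εB i)) ↔
      (∃ Q : Fin n → ℝ,
        (∀ i j : Fin n, i < j → SignType.sign (Aform n i j Q) = εA i j) ∧
        (∀ i : Fin n, SignType.sign (Btform n hn i Q) = εB i))) ∧
    (∀ P P' Q Q' : Fin n → ℝ,
      ((∀ i j : Fin n, i < j → SignType.sign (Aform n i j Q) = SignType.sign (Aform n i j P)) ∧
       (∀ i : Fin n, SignType.sign (Btform n hn i Q) = SignType.sign (Bform n i P))) →
      ((∀ i j : Fin n, i < j → SignType.sign (Aform n i j Q') = SignType.sign (Aform n i j P')) ∧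
       (∀ i : Fin n, SignType.sign (Btform n hn i Q') = SignType.sign (Bform n i P'))) →
      (faceB n P' ⊆ closure (faceB n P) ↔ faceBt n hn Q' ⊆ closure (faceBt n hn Q))) := by
  open Statement3Aux in
  constructor
  · intro εA εB
    constructor
    · rintro ⟨P, h1, h2⟩
      refine ⟨Tmap n hn P, fun i j hij => ?_, fun i => ?_⟩
      · rw [A_Tmap]; exact h1 i j hij
      · rw [Bt_Tmap]; exact h2 i
    · rintro ⟨Q, h1, h2⟩
      refine ⟨Tinv n hn Q, fun i j hij => ?_, fun i => ?_⟩
      · rw [← A_Tmap n hn i j (Tinv n hn Q), Tmap_Tinv]; exact h1 i j hij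
      · rw [← Bt_Tmap n hn i (Tinv n hn Q), Tmap_Tinv]; exact h2 i
  · rintro P P' Q Q' ⟨hA, hB⟩ ⟨hA', hB'⟩
    rw [face_image n hn P Q hA hB, face_image n hn P' Q' hA' hB']
    have himg : Tmap n hn '' closure (faceB n P) = closure (Tmap n hn '' faceB n P) :=
      (Thomeo n hn).image_closure (faceB n P)
    rw [← himg]
    exact (Set.image_subset_image_iff (Thomeo n hn).injective).symm
end
end

section
/- Let 𝓗 be a finite arrangement of linear hyperplanes through the origin in a finite-dimensional real vector space and let (E,γ,δ) be a double representation of its face poset satisfying monotonicity and transitivity. Suppose E_C = 0 for every chamber C of 𝓗. If D_1 and D_2 are codimension-one faces lying on distinct hyperplanes of 𝓗 (i.e. the unique hyperplane containing D_1 differs from the unique hyperplane containing D_2), then φ_{D_1 D_2} = 0. -/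
noncomputable section

variable {V : Type*} [NormedAddCommGroup V] [NormedSpace ℝ V] {ι : Type*}

universe u

/-! Choose base points `x₁ ∈ D₁`, `x₂ ∈ D₂`. No form vanishes at both, so each form vanishes
at most once on the segment `[x₁, x₂]`; finitely many forms therefore leave a point of the segment
in a chamber `C`, and transitivity factors `φ_{D₁D₂}` through `E_C = 0`. -/

-- `t ↦ g (x + t • (y - x))` is affine and not identically zero.
lemma subsingleton_setOf_apply_add_smul_sub_eq_zero {W : Type*} [AddCommGroup W] [Module ℝ W]
    (g : W →ₗ[ℝ] ℝ) {x y : W} (h : g x ≠ 0 ∨ g y ≠ 0) :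
    {t : ℝ | g (x + t • (y - x)) = 0}.Subsingleton := by
  intro s hs t ht
  simp only [Set.mem_ofPred_eq, map_add, map_smul, map_sub, smul_eq_mul] at hs ht
  by_contra hst
  have hslope : g y - g x = 0 := by
    have : (s - t) * (g y - g x) = 0 := by linarith
    exact (mul_eq_zero.mp this).resolve_left (sub_ne_zero.mpr hst)
  have hx : g x = 0 := by rw [hslope, mul_zero, add_zero] at hs; exact hs
  have hy : g y = 0 := by linarith
  exact h.elim (· hx) (· hy)

lemma exists_mem_segment_forall_apply_ne_zero {W : Type*} [AddCommGroup W] [Module ℝ W]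
    {ι : Type*} [Finite ι] (f : ι → W →ₗ[ℝ] ℝ) {x y : W} (h : ∀ i, f i x ≠ 0 ∨ f i y ≠ 0) :
    ∃ b ∈ segment ℝ x y, ∀ i, f i b ≠ 0 := by
  have hfin : (⋃ i, {t : ℝ | f i (x + t • (y - x)) = 0}).Finite :=
    Set.finite_iUnion fun i => (subsingleton_setOf_apply_add_smul_sub_eq_zero (f i) (h i)).finite
  obtain ⟨t, ht, hnot⟩ := ((Set.Icc_infinite (zero_lt_one' ℝ)).sdiff hfin).nonempty
  refine ⟨x + t • (y - x), segment_eq_image' ℝ x y ▸ ⟨t, ht, rfl⟩, fun i hi => hnot ?_⟩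
  exact Set.mem_iUnion.mpr ⟨i, hi⟩

lemma mem_faceOf_self (f : ι → V →ₗ[ℝ] ℝ) (x : V) : x ∈ faceOf f x := rfl

lemma apply_eq_zero_of_mem_faceOf {f : ι → V →ₗ[ℝ] ℝ} {x y : V} (hy : y ∈ faceOf f x)
    {i : ι} (hi : f i x = 0) : f i y = 0 := by
  have : SignType.sign (f i y) = SignType.sign (f i x) := congrFun hy i
  rwa [hi, sign_zero, sign_eq_zero_iff] at this

lemma isChamber_faceOf {f : ι → V →ₗ[ℝ] ℝ} {b : V} (hb : ∀ i, f i b ≠ 0) :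
    IsChamber f ⟨faceOf f b, b, rfl⟩ := by
  intro i y hy hi
  have : SignType.sign (f i y) = SignType.sign (f i b) := congrFun hy i
  rw [hi, sign_zero, eq_comm, sign_eq_zero_iff] at this
  exact hb i this

lemma Face.exists_isChamber_collin3 {f : ι → V →ₗ[ℝ] ℝ} [Finite ι] (A B : Face f)
    (h : ∀ i, (∀ y ∈ A.1, f i y = 0) → (∀ y ∈ B.1, f i y = 0) → False) :
    ∃ C : Face f, IsChamber f C ∧ Collin3 A C B := by
  obtain ⟨_, x, rfl⟩ := A
  obtain ⟨_, y, rfl⟩ := B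
  have hxy : ∀ i, f i x ≠ 0 ∨ f i y ≠ 0 := fun i => by
    by_contra! hi
    exact h i (fun _ hz => apply_eq_zero_of_mem_faceOf hz hi.1)
      (fun _ hz => apply_eq_zero_of_mem_faceOf hz hi.2)
  obtain ⟨b, hseg, hb⟩ := exists_mem_segment_forall_apply_ne_zero f hxy
  exact ⟨⟨faceOf f b, b, rfl⟩, isChamber_faceOf hb,
    x, mem_faceOf_self f x, b, mem_faceOf_self f b, y, mem_faceOf_self f y, hseg⟩

lemma phiMap_eq_zero_of_collin3 {f : ι → V →ₗ[ℝ] ℝ} {ψ : DoubleRep f}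
    (htrans : Transitivity ψ) {A B C : Face f} (hcol : Collin3 A C B)
    (hC : ∀ v : ψ.E C, v = 0) : phiMap ψ A B = 0 := by
  ext v
  rw [htrans A C B hcol, LinearMap.comp_apply, hC (phiMap ψ A C v), map_zero,
    LinearMap.zero_apply]

theorem statement14_general {V : Type*} [NormedAddCommGroup V] [NormedSpace ℝ V]
    {ι : Type*} [Finite ι]
    (f : ι → V →ₗ[ℝ] ℝ)
    (ψ : DoubleRep f) (htrans : Transitivity ψ)
    (hchamber : ∀ C : Face f, IsChamber f C → ∀ v : ψ.E C, v = 0)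
    (D1 D2 : Face f)
    (hdist : ∀ p q : ι, (∀ y ∈ D1.1, f p y = 0) → (∀ y ∈ D2.1, f q y = 0) →
      LinearMap.ker (f p) ≠ LinearMap.ker (f q)) :
    phiMap ψ D1 D2 = 0 := by
  obtain ⟨C, hC, hcol⟩ :=
    D1.exists_isChamber_collin3 D2 fun i h1 h2 => hdist i i h1 h2 rfl
  exact phiMap_eq_zero_of_collin3 htrans hcol (hchamber C hC)

/-- Let `(E,γ,δ)` be a double representation of the face poset of a finite
real hyperplane arrangement satisfying monotonicity and transitivity, with `E_C = 0` for
every chamber `C`. If `D₁, D₂` are codimension-one faces lying on distinct hyperplanes,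
then `φ_{D₁D₂} = 0`. -/
theorem statement14 {V : Type*} [NormedAddCommGroup V] [NormedSpace ℝ V]
    [FiniteDimensional ℝ V] {ι : Type*} [Finite ι]
    (f : ι → V →ₗ[ℝ] ℝ) (hf : ∀ i, f i ≠ 0)
    (hker : ∀ p q : ι, LinearMap.ker (f p) = LinearMap.ker (f q) → p = q)
    (ψ : DoubleRep f) (hmono : Monotonicity ψ) (htrans : Transitivity ψ)
    (hchamber : ∀ C : Face f, IsChamber f C → ∀ v : ψ.E C, v = 0)
    (D1 D2 : Face f) (hD1 : IsCodimOne f D1) (hD2 : IsCodimOne f D2)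
    (hdist : ∀ p q : ι, (∀ y ∈ D1.1, f p y = 0) → (∀ y ∈ D2.1, f q y = 0) →
      LinearMap.ker (f p) ≠ LinearMap.ker (f q)) :
    phiMap ψ D1 D2 = 0 :=
  statement14_general f ψ htrans hchamber D1 D2 hdist

end
end
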